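/- Let (E, L, E) be a minimal labeled space. Suppose there exist a nonempty set A₀ ∈ E and an irreducible labeled path β such that L(A₀ E^{n|β|}) = {βⁿ} for all n ≥ 1. Then there is N ≥ 1 such that for all n ≥ N, r(A₀, x_{[1,n]}) ⊆ ∪_{j=1}^{n-1} r(A₀, x_{[1,j]}), where x = βββ··· is the infinite repetition of β. -/

import Mathlib

universe u v

variable {V : Type u} {Λ : Type v}

/-- The relative range `r(S, α)` of a set of vertices along a labeled path. -/
def relRange (Edge : V → Λ → V → Prop) : Set V → List Λ → Set V
  | S, [] => S
  | S, a :: α => relRange Edge {w | ∃ u ∈ S, Edge u a w} α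

/-- The range `r(α)` of a labeled path. -/
def lrange (Edge : V → Λ → V → Prop) (α : List Λ) : Set V :=
  relRange Edge Set.univ α

/-- `α` is a (nonempty) labeled path of the labeled graph. -/
def IsLP (Edge : V → Λ → V → Prop) (α : List Λ) : Prop :=
  α ≠ [] ∧ (lrange Edge α).Nonempty

/-- `L(SE¹)`: labels of edges emitted from `S`. -/
def edgeLabels (Edge : V → Λ → V → Prop) (S : Set V) : Set Λ :=
  {a | ∃ u ∈ S, ∃ w, Edge u a w}

/-- `S` is regular: every nonempty `B ∈ ℬ` with `B ⊆ S` emits a finite nonzero set of labels. -/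
def RegularSet (Edge : V → Λ → V → Prop) (ℬ : Set (Set V)) (S : Set V) : Prop :=
  ∀ B ∈ ℬ, B ⊆ S → B.Nonempty →
    (edgeLabels Edge B).Finite ∧ (edgeLabels Edge B).Nonempty

/-- `H ⊆ ℬ` is hereditary. -/
def Hered (Edge : V → Λ → V → Prop) (ℬ H : Set (Set V)) : Prop :=
  H ⊆ ℬ ∧ (∀ A ∈ H, ∀ α : List Λ, IsLP Edge α → relRange Edge A α ∈ H) ∧
    (∀ A ∈ H, ∀ B ∈ H, A ∪ B ∈ H) ∧ (∀ A ∈ H, ∀ B ∈ ℬ, B ⊆ A → B ∈ H)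

/-- `H` is saturated. -/
def Satur (Edge : V → Λ → V → Prop) (ℬ H : Set (Set V)) : Prop :=
  ∀ A ∈ ℬ, RegularSet Edge ℬ A →
    (∀ α : List Λ, IsLP Edge α → relRange Edge A α ∈ H) → A ∈ H

/-- `H(A)`: sets covered by finitely many relative ranges `r(A, αᵢ)`, `αᵢ ∈ L^#(E)`. -/
def HSet (Edge : V → Λ → V → Prop) (ℬ : Set (Set V)) (A : Set V) : Set (Set V) :=
  {B ∈ ℬ | ∃ l : List (List Λ), (∀ α ∈ l, α = [] ∨ IsLP Edge α) ∧
    B ⊆ ⋃ α ∈ l, relRange Edge A α}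

/-- `S(H(A))`: the saturation of `H(A)`. -/
def SHSet (Edge : V → Λ → V → Prop) (ℬ : Set (Set V)) (A : Set V) : Set (Set V) :=
  {B ∈ ℬ | ∃ n : ℕ,
    (∀ β : List Λ, (β = [] ∨ IsLP Edge β) → β.length = n →
      relRange Edge B β ∈ HSet Edge ℬ A) ∧
    (∀ γ : List Λ, (γ = [] ∨ IsLP Edge γ) → γ.length < n →
      ∃ C ∈ HSet Edge ℬ A, ∃ D ∈ ℬ, RegularSet Edge ℬ D ∧ relRange Edge B γ = C ∪ D)}

/-- `ℬ` is an accommodating set for the labeled graph. -/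
def Accommodating (Edge : V → Λ → V → Prop) (ℬ : Set (Set V)) : Prop :=
  (∀ α : List Λ, IsLP Edge α → lrange Edge α ∈ ℬ) ∧
    (∀ A ∈ ℬ, ∀ α : List Λ, IsLP Edge α → relRange Edge A α ∈ ℬ) ∧
    (∀ A ∈ ℬ, ∀ B ∈ ℬ, A ∪ B ∈ ℬ) ∧ (∀ A ∈ ℬ, ∀ B ∈ ℬ, A ∩ B ∈ ℬ)

/-- `ℬ` is non-degenerate: closed under relative complements (and contains `∅`). -/
def NonDegenerate (ℬ : Set (Set V)) : Prop :=
  (∅ : Set V) ∈ ℬ ∧ ∀ A ∈ ℬ, ∀ B ∈ ℬ, A \ B ∈ ℬ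

/-- The labeled space is weakly left-resolving. -/
def WLR (Edge : V → Λ → V → Prop) (ℬ : Set (Set V)) : Prop :=
  ∀ A ∈ ℬ, ∀ B ∈ ℬ, ∀ α : List Λ, IsLP Edge α →
    relRange Edge (A ∩ B) α = relRange Edge A α ∩ relRange Edge B α

/-- `ℬ` is the smallest non-degenerate accommodating set. -/
def SmallestAccom (Edge : V → Λ → V → Prop) (ℬ : Set (Set V)) : Prop :=
  Accommodating Edge ℬ ∧ NonDegenerate ℬ ∧
    ∀ ℬ' : Set (Set V), Accommodating Edge ℬ' → NonDegenerate ℬ' → ℬ ⊆ ℬ'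

/-- `x_{[1,n]}`: the length-`n` prefix of an infinite word. -/
def wordPrefix (x : ℕ → Λ) (n : ℕ) : List Λ := List.ofFn fun i : Fin n => x i.val

/-- `x` lies in the closure of `L(E^∞)`: all finite prefixes are labeled paths. -/
def InfWord (Edge : V → Λ → V → Prop) (x : ℕ → Λ) : Prop :=
  ∀ n : ℕ, 1 ≤ n → IsLP Edge (wordPrefix x n)

/-- Strong cofinality of a labeled space. -/
def StrCofinal (Edge : V → Λ → V → Prop) (ℬ : Set (Set V)) : Prop :=
  ∀ A ∈ ℬ, A.Nonempty → ∀ x : ℕ → Λ, InfWord Edge x →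
    ∃ N : ℕ, 1 ≤ N ∧ ∃ l : List (List Λ), (∀ α ∈ l, IsLP Edge α) ∧
      lrange Edge (wordPrefix x N) ⊆ ⋃ α ∈ l, relRange Edge A α

/-- Minimality: the only hereditary saturated subsets of `ℬ` are `{∅}` and `ℬ`. -/
def MinimalLS (Edge : V → Λ → V → Prop) (ℬ : Set (Set V)) : Prop :=
  ∀ H : Set (Set V), Hered Edge ℬ H → Satur Edge ℬ H → H ⊆ {∅} ∨ H = ℬ

/-- `L(SEⁿ)`: labels of paths of length `n` with source in `S`. -/
def labelsOfLen (Edge : V → Λ → V → Prop) (S : Set V) (n : ℕ) : Set (List Λ) :=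
  {β | β.length = n ∧ (relRange Edge S β).Nonempty}

/-- The labeled space is disagreeable. -/
def Disagreeable (Edge : V → Λ → V → Prop) (ℬ : Set (Set V)) : Prop :=
  ∀ A ∈ ℬ, A.Nonempty → ∀ β : List Λ, IsLP Edge β →
    ∃ n : ℕ, 1 ≤ n ∧ labelsOfLen Edge A (β.length * n) ≠ {(List.replicate n β).flatten}

/-- `(α, A)` is a cycle. -/
def IsCycle (Edge : V → Λ → V → Prop) (ℬ : Set (Set V)) (α : List Λ) (A : Set V) : Prop :=
  IsLP Edge α ∧ A ∈ ℬ ∧ A.Nonempty ∧ ∀ B ∈ ℬ, B ⊆ A → relRange Edge B α = B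

/-- The cycle `(α, A)` has an exit. -/
def CycleHasExit (Edge : V → Λ → V → Prop) (ℬ : Set (Set V)) (α : List Λ) (A : Set V) : Prop :=
  ∃ t : ℕ, 1 ≤ t ∧ t ≤ α.length ∧ ∃ B ∈ ℬ, B.Nonempty ∧
    B ⊆ relRange Edge A (α.take t) ∧
    edgeLabels Edge B ≠ {a : Λ | α[t % α.length]? = some a}

/-- The cycle `(α, A)` has no exits. -/
def CycleNoExit (Edge : V → Λ → V → Prop) (ℬ : Set (Set V)) (α : List Λ) (A : Set V) : Prop :=
  ∀ t : ℕ, 1 ≤ t → t ≤ α.length → ∀ B ∈ ℬ, B.Nonempty →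
    B ⊆ relRange Edge A (α.take t) →
    RegularSet Edge ℬ B ∧ edgeLabels Edge B = {a : Λ | α[t % α.length]? = some a}

/-- Condition (L): every cycle has an exit. -/
def CondL (Edge : V → Λ → V → Prop) (ℬ : Set (Set V)) : Prop :=
  ∀ (α : List Λ) (A : Set V), IsCycle Edge ℬ α A → CycleHasExit Edge ℬ α A

/-- `α` is a loop at `A`. -/
def IsLoop (Edge : V → Λ → V → Prop) (α : List Λ) (A : Set V) : Prop :=
  IsLP Edge α ∧ A ⊆ relRange Edge A α

/-- The loop `(α, A)` has an exit. -/
def LoopHasExit (Edge : V → Λ → V → Prop) (α : List Λ) (A : Set V) : Prop :=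
  {β : List Λ | ∃ k : ℕ, 1 ≤ k ∧ k ≤ α.length ∧ β = α.take k} ⊂
      {β : List Λ | 1 ≤ β.length ∧ β.length ≤ α.length ∧ (relRange Edge A β).Nonempty} ∨
    A ⊂ relRange Edge A α

/-- `β` is an irreducible path: not a repetition of a proper initial path. -/
def IrreduciblePath (β : List Λ) : Prop :=
  ∀ k : ℕ, 1 ≤ k → k < β.length → ∀ m : ℕ, β ≠ (List.replicate m (β.take k)).flatten

/-- The generalized vertex `[v]_l`. -/
def gvClass (Edge : V → Λ → V → Prop) (l : ℕ) (v : V) : Set V :=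
  {w | ∀ β : List Λ, 1 ≤ β.length → β.length ≤ l → (v ∈ lrange Edge β ↔ w ∈ lrange Edge β)}

/-- `s(x)`: sources of infinite paths labeled by `x`. -/
def srcInf (Edge : V → Λ → V → Prop) (x : ℕ → Λ) : Set V :=
  {w | ∃ p : ℕ → V, p 0 = w ∧ ∀ n : ℕ, Edge (p n) (x n) (p (n + 1))}

/-!
Write `x = βββ⋯` and `L = |β|`. The sets `B ∈ ℰ` all of whose relative ranges at some
fixed depth lie in `H(A₀)` form a hereditary saturated family containing `A₀`, so by minimality
it contains `r(β)`. This covers `r(x_{[1,N]})` by finitely many `r(A₀, α)`, and by periodicity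
the same cover works for `r(A₀, x_{[1,k]})` whenever `k ≡ N (mod L)`.
Since `L(A₀E^{nL}) = {βⁿ}`, every path leaving `A₀` that can still be continued reads along
`x`; so a covering word `α` is some prefix `x_{[1,m]}` with `m < k`, and as `x` continues from
positions `m` and `k` with the same word, irreducibility of `β` gives `m ≡ k (mod L)`. A vertex
of `r(A₀, x_{[1,n]})` reached through `r(A₀, x_{[1,k]})` therefore already lies in
`r(A₀, x_{[1,m+n-k]})`.
-/

open Function

section RelRange

variable {Edge : V → Λ → V → Prop}

theorem relRange_append (S : Set V) (u v : List Λ) :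
    relRange Edge S (u ++ v) = relRange Edge (relRange Edge S u) v := by
  induction u generalizing S with
  | nil => rfl
  | cons a u ih => exact ih _

theorem relRange_mono {S T : Set V} (h : S ⊆ T) (u : List Λ) :
    relRange Edge S u ⊆ relRange Edge T u := by
  induction u generalizing S T with
  | nil => exact h
  | cons a u ih => exact ih fun w ⟨z, hz, he⟩ => ⟨z, h hz, he⟩

theorem relRange_subset_lrange (S : Set V) (u : List Λ) :
    relRange Edge S u ⊆ lrange Edge u :=
  relRange_mono (Set.subset_univ S) u

theorem relRange_empty (u : List Λ) : relRange Edge (∅ : Set V) u = ∅ := by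
  induction u with
  | nil => rfl
  | cons a u ih => simpa [relRange] using ih

theorem relRange_union (S T : Set V) (u : List Λ) :
    relRange Edge (S ∪ T) u = relRange Edge S u ∪ relRange Edge T u := by
  induction u generalizing S T with
  | nil => rfl
  | cons a u ih =>
    simp only [relRange, ← ih]
    congr 1
    ext w
    simp [or_and_right, exists_or]

theorem mem_relRange_iff {S : Set V} {u : List Λ} {w : V} :
    w ∈ relRange Edge S u ↔ ∃ s ∈ S, w ∈ relRange Edge {s} u := by
  refine ⟨fun h => ?_, fun ⟨s, hs, hw⟩ =>
    relRange_mono (Set.singleton_subset_iff.2 hs) u hw⟩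
  induction u generalizing S with
  | nil => exact ⟨w, h, rfl⟩
  | cons a u ih =>
    obtain ⟨v, ⟨s, hs, he⟩, hw⟩ := ih h
    exact ⟨s, hs, relRange_mono (by rintro _ rfl; exact ⟨s, rfl, he⟩) u hw⟩

theorem mem_relRange_append_iff {S : Set V} {u v : List Λ} {w : V} :
    w ∈ relRange Edge S (u ++ v) ↔ ∃ z ∈ relRange Edge S u, w ∈ relRange Edge {z} v := by
  rw [relRange_append, mem_relRange_iff]

theorem Set.Nonempty.of_relRange_append {S : Set V} {u v : List Λ}
    (h : (relRange Edge S (u ++ v)).Nonempty) : (relRange Edge S u).Nonempty := by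
  obtain ⟨w, hw⟩ := h
  obtain ⟨z, hz, -⟩ := mem_relRange_append_iff.1 hw
  exact ⟨z, hz⟩

theorem isLP_of_relRange_nonempty {S : Set V} {u : List Λ} (hu : u ≠ [])
    (h : (relRange Edge S u).Nonempty) : IsLP Edge u :=
  ⟨hu, h.mono (relRange_subset_lrange S u)⟩

end RelRange

section HSet

variable {Edge : V → Λ → V → Prop} {ℰ : Set (Set V)} {A B : Set V}

theorem relRange_mem_of_accommodating (hacc : Accommodating Edge ℰ) (h0 : ∅ ∈ ℰ)
    (hB : B ∈ ℰ) (γ : List Λ) : relRange Edge B γ ∈ ℰ := by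
  rcases eq_or_ne γ [] with rfl | hγ
  · exact hB
  rcases (relRange Edge B γ).eq_empty_or_nonempty with he | hne
  · rw [he]
    exact h0
  · exact hacc.2.1 B hB γ (isLP_of_relRange_nonempty hγ hne)

theorem mem_HSet_of_subset_biUnion (hB : B ∈ ℰ) (l : List (List Λ))
    (hcov : B ⊆ ⋃ α ∈ l, relRange Edge A α) : B ∈ HSet Edge ℰ A := by
  classical
  refine ⟨hB, l.filter fun α => (relRange Edge A α).Nonempty, fun α hα => ?_,
    fun w hw => ?_⟩
  · have hne : (relRange Edge A α).Nonempty := by simpa using (List.mem_filter.1 hα).2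
    rcases eq_or_ne α [] with hα | hα
    exacts [Or.inl hα, Or.inr (isLP_of_relRange_nonempty hα hne)]
  · obtain ⟨α, hα, hwα⟩ := Set.mem_iUnion₂.1 (hcov hw)
    exact Set.mem_iUnion₂.2
      ⟨α, List.mem_filter.2 ⟨hα, by simpa using ⟨w, hwα⟩⟩, hwα⟩

theorem self_mem_HSet (hA : A ∈ ℰ) : A ∈ HSet Edge ℰ A :=
  mem_HSet_of_subset_biUnion hA [[]] fun _ hw =>
    Set.mem_iUnion₂.2 ⟨[], List.mem_singleton_self _, hw⟩

theorem empty_mem_HSet (h0 : ∅ ∈ ℰ) : ∅ ∈ HSet Edge ℰ A :=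
  mem_HSet_of_subset_biUnion h0 [] (Set.empty_subset _)

theorem mem_HSet_of_subset {B' : Set V} (hB' : B' ∈ ℰ) (hsub : B' ⊆ B)
    (hB : B ∈ HSet Edge ℰ A) : B' ∈ HSet Edge ℰ A :=
  ⟨hB', hB.2.choose, hB.2.choose_spec.1, hsub.trans hB.2.choose_spec.2⟩

theorem union_mem_HSet (hacc : Accommodating Edge ℰ) {B' : Set V} (hB : B ∈ HSet Edge ℰ A)
    (hB' : B' ∈ HSet Edge ℰ A) : B ∪ B' ∈ HSet Edge ℰ A := by
  obtain ⟨hBℰ, l, -, hcov⟩ := hB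
  obtain ⟨hB'ℰ, l', -, hcov'⟩ := hB'
  refine mem_HSet_of_subset_biUnion (hacc.2.2.1 B hBℰ B' hB'ℰ) (l ++ l') ?_
  simp only [List.mem_append, Set.iUnion_or, Set.iUnion_union_distrib]
  exact Set.union_subset_union hcov hcov'

theorem relRange_mem_HSet (hacc : Accommodating Edge ℰ) (h0 : ∅ ∈ ℰ)
    (hB : B ∈ HSet Edge ℰ A) (γ : List Λ) : relRange Edge B γ ∈ HSet Edge ℰ A := by
  obtain ⟨hBℰ, l, -, hcov⟩ := hB
  refine mem_HSet_of_subset_biUnion (relRange_mem_of_accommodating hacc h0 hBℰ γ)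
    (l.map (· ++ γ)) fun w hw => ?_
  obtain ⟨b, hb, hwb⟩ := mem_relRange_iff.1 hw
  obtain ⟨α, hα, hbα⟩ := Set.mem_iUnion₂.1 (hcov hb)
  exact Set.mem_iUnion₂.2
    ⟨α ++ γ, List.mem_map_of_mem hα, mem_relRange_append_iff.2 ⟨b, hbα, hwb⟩⟩

theorem exists_length_le_of_mem_HSet (hB : B ∈ HSet Edge ℰ A) :
    ∃ K, B ⊆ ⋃ (α : List Λ) (_ : α.length ≤ K), relRange Edge A α := by
  obtain ⟨-, l, -, hcov⟩ := hB
  refine ⟨(l.map List.length).sum, hcov.trans fun w hw => ?_⟩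
  obtain ⟨α, hα, hwα⟩ := Set.mem_iUnion₂.1 hw
  exact Set.mem_iUnion₂.2 ⟨α, List.le_sum_of_mem (List.mem_map_of_mem hα), hwα⟩

end HSet

section Minimality

variable {Edge : V → Λ → V → Prop} {ℰ : Set (Set V)} {A B : Set V}

def RangesInHSetAt (Edge : V → Λ → V → Prop) (ℰ : Set (Set V)) (A B : Set V) (n : ℕ) :
    Prop :=
  ∀ γ : List Λ, γ.length = n → relRange Edge B γ ∈ HSet Edge ℰ A

/-- `S(H(A))` cut down to the first clause of `SHSet`. -/
def eventualHSet (Edge : V → Λ → V → Prop) (ℰ : Set (Set V)) (A : Set V) : Set (Set V) :=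
  {B ∈ ℰ | ∃ n, RangesInHSetAt Edge ℰ A B n}

theorem RangesInHSetAt.mono (hacc : Accommodating Edge ℰ) (h0 : ∅ ∈ ℰ) {n m : ℕ}
    (h : RangesInHSetAt Edge ℰ A B n) (hnm : n ≤ m) :
    RangesInHSetAt Edge ℰ A B m := by
  intro γ hγ
  rw [← List.take_append_drop n γ, relRange_append]
  exact relRange_mem_HSet hacc h0 (h _ (by simp [hγ, hnm])) _

theorem hered_eventualHSet (hacc : Accommodating Edge ℰ) (h0 : ∅ ∈ ℰ) :
    Hered Edge ℰ (eventualHSet Edge ℰ A) := by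
  refine ⟨fun B hB => hB.1, ?_, ?_, ?_⟩
  · rintro B ⟨hBℰ, n, hn⟩ δ hδ
    refine ⟨hacc.2.1 B hBℰ δ hδ, n, fun γ hγ => ?_⟩
    rw [← relRange_append]
    exact hn.mono hacc h0 (Nat.le_add_left n δ.length) _ (by simp [hγ, Nat.add_comm])
  · rintro B ⟨hBℰ, n, hn⟩ B' ⟨hB'ℰ, n', hn'⟩
    refine ⟨hacc.2.2.1 B hBℰ B' hB'ℰ, max n n', fun γ hγ => ?_⟩
    rw [relRange_union]
    exact union_mem_HSet hacc (hn.mono hacc h0 (le_max_left n n') γ hγ)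
      (hn'.mono hacc h0 (le_max_right n n') γ hγ)
  · rintro B ⟨-, n, hn⟩ B' hB'ℰ hsub
    exact ⟨hB'ℰ, n, fun γ hγ => mem_HSet_of_subset
      (relRange_mem_of_accommodating hacc h0 hB'ℰ γ) (relRange_mono hsub γ) (hn γ hγ)⟩

theorem satur_eventualHSet (hacc : Accommodating Edge ℰ) (h0 : ∅ ∈ ℰ) :
    Satur Edge ℰ (eventualHSet Edge ℰ A) := by
  intro B hBℰ hreg hall
  have hfin : (edgeLabels Edge B).Finite := by
    rcases B.eq_empty_or_nonempty with rfl | hne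
    · simp [edgeLabels]
    · exact (hreg B hBℰ subset_rfl hne).1
  have hlabels :
      ∀ a ∈ edgeLabels Edge B, ∃ n, RangesInHSetAt Edge ℰ A (relRange Edge B [a]) n :=
    fun a ⟨u, hu, w, he⟩ => (hall [a] (isLP_of_relRange_nonempty (List.cons_ne_nil a [])
      ⟨w, u, hu, he⟩)).2
  -- finitely many labels, each eventually good, so one depth works for all of them
  obtain ⟨n, hn⟩ := (Filter.eventually_all_finite hfin).2 (fun a ha =>
    Filter.eventually_atTop.2 ((hlabels a ha).imp fun n hn _ => hn.mono hacc h0)) |>.exists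
  refine ⟨hBℰ, n + 1, fun γ hγ => ?_⟩
  obtain ⟨a, γ', rfl⟩ := List.exists_cons_of_length_eq_add_one hγ
  rw [← List.singleton_append, relRange_append]
  rcases (relRange Edge B [a]).eq_empty_or_nonempty with he | ⟨w, u, hu, hua⟩
  · rw [he, relRange_empty]
    exact empty_mem_HSet h0
  · exact hn a ⟨u, hu, w, hua⟩ γ' (by simpa using hγ)

theorem eventualHSet_eq_of_minimal (hacc : Accommodating Edge ℰ) (h0 : ∅ ∈ ℰ)
    (hmin : MinimalLS Edge ℰ) (hA : A ∈ ℰ) (hAne : A.Nonempty) :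
    eventualHSet Edge ℰ A = ℰ := by
  have hAmem : A ∈ eventualHSet Edge ℰ A :=
    ⟨hA, 0, fun γ hγ => by rw [List.length_eq_zero_iff.1 hγ]; exact self_mem_HSet hA⟩
  exact (hmin _ (hered_eventualHSet hacc h0) (satur_eventualHSet hacc h0)).resolve_left
    fun hsub => hAne.ne_empty (hsub hAmem)

end Minimality

namespace Function.Periodic

variable {α : Type*} {f : ℕ → α} {a b : ℕ}

theorem add_mul_nat (h : Periodic f a) (m n : ℕ) : f (m + n * a) = f m := by
  simpa using h.nat_mul n m

theorem mod_nat (ha : Periodic f a) (hb : Periodic f b) : Periodic f (a % b) := fun m => by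
  rw [← hb.add_mul_nat _ (a / b), add_assoc, Nat.mod_add_div', ha]

theorem gcd_nat (ha : Periodic f a) (hb : Periodic f b) : Periodic f (a.gcd b) := by
  induction a, b using Nat.gcd.induction with
  | H0 n => simpa using hb
  | H1 m n _ ih => rw [Nat.gcd_rec]; exact ih (hb.mod_nat ha) ha

end Function.Periodic

section WordSegment

variable {x : ℕ → Λ} {L : ℕ}

/-- `wordSegment x k t` is the factor `x_{[k+1, k+t]}` of the infinite word `x`. -/
def wordSegment (x : ℕ → Λ) (k t : ℕ) : List Λ := List.ofFn fun i : Fin t => x (k + i)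

@[simp] theorem length_wordSegment (x : ℕ → Λ) (k t : ℕ) : (wordSegment x k t).length = t :=
  List.length_ofFn

@[simp] theorem getElem_wordSegment (x : ℕ → Λ) (k t i : ℕ)
    (hi : i < (wordSegment x k t).length) :
    (wordSegment x k t)[i] = x (k + i) :=
  List.getElem_ofFn hi

theorem wordSegment_add (x : ℕ → Λ) (k a b : ℕ) :
    wordSegment x k (a + b) = wordSegment x k a ++ wordSegment x (k + a) b := by
  simp [wordSegment, List.ofFn_add, add_assoc]

theorem wordSegment_zero_add (x : ℕ → Λ) (a b : ℕ) :
    wordSegment x 0 (a + b) = wordSegment x 0 a ++ wordSegment x a b := by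
  rw [wordSegment_add, zero_add]

theorem take_wordSegment (x : ℕ → Λ) (k : ℕ) {a t : ℕ} (h : a ≤ t) :
    (wordSegment x k t).take a = wordSegment x k a := by
  rw [← Nat.add_sub_cancel' h, wordSegment_add, List.take_left' (length_wordSegment x k a)]

theorem wordSegment_eq_of_modEq (hx : Periodic x L) {k k' : ℕ} (h : k ≡ k' [MOD L]) (t : ℕ) :
    wordSegment x k t = wordSegment x k' t := by
  refine List.ext_getElem (by simp) fun i _ _ => ?_
  rw [getElem_wordSegment, getElem_wordSegment, ← hx.map_mod_nat, ← hx.map_mod_nat (k' + i)]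
  exact congrArg x (Nat.ModEq.add_right i h)

theorem flatten_replicate_wordSegment (hx : Periodic x L) (n : ℕ) :
    (List.replicate n (wordSegment x 0 L)).flatten = wordSegment x 0 (n * L) := by
  induction n with
  | zero => simp [wordSegment]
  | succ n ih =>
    rw [List.replicate_succ', List.flatten_append, ih, Nat.succ_mul, wordSegment_add]
    simp [wordSegment_eq_of_modEq hx (Nat.modEq_zero_iff_dvd.2 (dvd_mul_left L n)).symm]

theorem apply_add_eq_of_wordSegment_eq {j k t i : ℕ} (h : wordSegment x j t = wordSegment x k t)
    (hi : i < t) : x (j + i) = x (k + i) := by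
  have h' := List.getElem_of_eq h (by simpa using hi)
  simpa only [getElem_wordSegment] using h'

theorem periodic_sub_of_wordSegment_eq (hx : Periodic x L) (hL : 0 < L) {j k : ℕ} (hjk : j ≤ k)
    (h : wordSegment x j L = wordSegment x k L) : Periodic x (k - j) := by
  have hshift (t : ℕ) : x (j + t) = x (k + t) := by
    rw [← Nat.mod_add_div' t L, ← add_assoc, ← add_assoc, hx.add_mul_nat, hx.add_mul_nat]
    exact apply_add_eq_of_wordSegment_eq h (Nat.mod_lt t hL)
  have hjL : j ≤ j * L := Nat.le_mul_of_pos_right j hL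
  intro i
  calc x (i + (k - j)) = x (k + (i + j * L - j)) := by
        rw [← hx.add_mul_nat _ j]; congr 1; omega
    _ = x (i + j * L) := by rw [← hshift]; congr 1; omega
    _ = x i := hx.add_mul_nat i j

theorem dvd_of_periodic_of_irreduciblePath (hx : Periodic x L) (hL : 0 < L)
    (hirr : IrreduciblePath (wordSegment x 0 L)) {d : ℕ} (hd : Periodic x d) : L ∣ d := by
  have hgL : d.gcd L ∣ L := Nat.gcd_dvd_right d L
  rcases (Nat.le_of_dvd hL hgL).lt_or_eq with hlt | heq
  · refine absurd ?_ (hirr _ (Nat.gcd_pos_of_pos_right d hL) (by simpa using hlt) (L / d.gcd L))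
    rw [take_wordSegment x 0 hlt.le, flatten_replicate_wordSegment (hd.gcd_nat hx),
      Nat.div_mul_cancel hgL]
  · exact heq ▸ Nat.gcd_dvd_left d L

theorem modEq_of_wordSegment_eq (hx : Periodic x L) (hL : 0 < L)
    (hirr : IrreduciblePath (wordSegment x 0 L)) {j k : ℕ}
    (h : wordSegment x j L = wordSegment x k L) : j ≡ k [MOD L] := by
  rcases le_total j k with hjk | hkj
  · exact (Nat.modEq_iff_dvd' hjk).2
      (dvd_of_periodic_of_irreduciblePath hx hL hirr (periodic_sub_of_wordSegment_eq hx hL hjk h))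
  · exact ((Nat.modEq_iff_dvd' hkj).2 (dvd_of_periodic_of_irreduciblePath hx hL hirr
      (periodic_sub_of_wordSegment_eq hx hL hkj h.symm))).symm

theorem exists_periodic_wordSegment_eq {β : List Λ} (hβ : β ≠ []) :
    ∃ x : ℕ → Λ, Periodic x β.length ∧ wordSegment x 0 β.length = β := by
  have hL := List.length_pos_iff.2 hβ
  refine ⟨fun i => β[i % β.length]'(Nat.mod_lt i hL), fun i => by simp,
    List.ext_getElem (by simp) fun i hi _ => ?_⟩
  simp [Nat.mod_eq_of_lt (by simpa using hi : i < β.length)]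

end WordSegment

section Forcing

variable {Edge : V → Λ → V → Prop} {A₀ : Set V} {x : ℕ → Λ} {L : ℕ}

theorem take_eq_wordSegment_of_relRange_nonempty (hL : 0 < L)
    (hlab : ∀ n, 1 ≤ n → labelsOfLen Edge A₀ (n * L) = {wordSegment x 0 (n * L)})
    {Δ : List Λ} (hΔ : (relRange Edge A₀ Δ).Nonempty) {j : ℕ}
    (hj : j + L ≤ Δ.length + 1) :
    Δ.take j = wordSegment x 0 j := by
  set n := Δ.length / L
  have hjn : j ≤ n * L := by
    have : Δ.length < n * L + L := Nat.lt_div_mul_add hL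
    omega
  rcases Nat.eq_zero_or_pos n with hn | hn
  · obtain rfl : j = 0 := by simpa [hn] using hjn
    simp [wordSegment]
  have hmem : Δ.take (n * L) ∈ labelsOfLen Edge A₀ (n * L) := by
    refine ⟨by simp [n, Nat.div_mul_le_self], ?_⟩
    rw [← List.take_append_drop (n * L) Δ] at hΔ
    exact hΔ.of_relRange_append
  rw [hlab n hn, Set.mem_singleton_iff] at hmem
  calc Δ.take j = (Δ.take (n * L)).take j := by rw [List.take_take, min_eq_left hjn]
    _ = wordSegment x 0 j := by rw [hmem, take_wordSegment x 0 hjn]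

theorem wordSegment_eq_take_of_mem_relRange (hL : 0 < L)
    (hlab : ∀ n, 1 ≤ n → labelsOfLen Edge A₀ (n * L) = {wordSegment x 0 (n * L)})
    {z : V} {j : ℕ} (hz : z ∈ relRange Edge A₀ (wordSegment x 0 j)) {w : List Λ}
    (hw : (relRange Edge {z} w).Nonempty) (hwL : 2 * L ≤ w.length + 1) :
    wordSegment x j L = w.take L := by
  obtain ⟨v, hv⟩ := hw
  have h := take_eq_wordSegment_of_relRange_nonempty hL hlab
    ⟨v, mem_relRange_append_iff.2 ⟨z, hz, hv⟩⟩ (j := j + L) (by simp; omega)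
  have htake := List.take_length_add_append (l₁ := wordSegment x 0 j) (l₂ := w) L
  rw [length_wordSegment] at htake
  rw [wordSegment_zero_add, htake] at h
  exact (List.append_cancel_left h).symm

theorem relRange_wordSegment_subset_of_cover (hx : Periodic x L) (hL : 0 < L)
    (hirr : IrreduciblePath (wordSegment x 0 L))
    (hlab : ∀ n, 1 ≤ n → labelsOfLen Edge A₀ (n * L) = {wordSegment x 0 (n * L)})
    {K k n : ℕ}
    (hcov : relRange Edge A₀ (wordSegment x 0 k) ⊆
      ⋃ (α : List Λ) (_ : α.length ≤ K), relRange Edge A₀ α)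
    (hKk : K < k) (hkn : k + 2 * L ≤ n) :
    relRange Edge A₀ (wordSegment x 0 n) ⊆
      ⋃ j ∈ Finset.Icc 1 (n - 1), relRange Edge A₀ (wordSegment x 0 j) := by
  intro v hv
  rw [← Nat.add_sub_of_le (by omega : k ≤ n), wordSegment_zero_add] at hv
  obtain ⟨z, hzk, hvz⟩ := mem_relRange_append_iff.1 hv
  obtain ⟨α, hαK, hzα⟩ := Set.mem_iUnion₂.1 (hcov hzk)
  have hα : α = wordSegment x 0 α.length := by
    have h := take_eq_wordSegment_of_relRange_nonempty hL hlab
      ⟨v, mem_relRange_append_iff.2 ⟨z, hzα, hvz⟩⟩ (j := α.length) (by simp; omega)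
    rwa [List.take_left' rfl] at h
  rw [hα] at hzα
  -- both `α.length` and `k` are positions at which `x` continues with the same word
  have hmod : α.length ≡ k [MOD L] := modEq_of_wordSegment_eq hx hL hirr
    ((wordSegment_eq_take_of_mem_relRange hL hlab hzα ⟨v, hvz⟩ (by simp; omega)).trans
      (wordSegment_eq_take_of_mem_relRange hL hlab hzk ⟨v, hvz⟩ (by simp; omega)).symm)
  refine Set.mem_iUnion₂.2
    ⟨α.length + (n - k), Finset.mem_Icc.2 ⟨by omega, by omega⟩, ?_⟩
  rw [wordSegment_zero_add, wordSegment_eq_of_modEq hx hmod]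
  exact mem_relRange_append_iff.2 ⟨z, hzα, hvz⟩

end Forcing

theorem minimal_repetition_range_absorption_general (Edge : V → Λ → V → Prop) (ℰ : Set (Set V))
    (hsm : SmallestAccom Edge ℰ) (hmin : MinimalLS Edge ℰ)
    (A₀ : Set V) (hA₀ : A₀ ∈ ℰ) (hA₀ne : A₀.Nonempty)
    (β : List Λ) (hβ : IsLP Edge β) (hirr : IrreduciblePath β)
    (hlab : ∀ n : ℕ, 1 ≤ n →
      labelsOfLen Edge A₀ (n * β.length) = {(List.replicate n β).flatten}) :
    ∃ N : ℕ, 1 ≤ N ∧ ∀ n : ℕ, N ≤ n →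
      relRange Edge A₀ ((List.replicate n β).flatten.take n) ⊆
        ⋃ j ∈ Finset.Icc 1 (n - 1), relRange Edge A₀ ((List.replicate n β).flatten.take j) := by
  obtain ⟨hacc, ⟨h0, -⟩, -⟩ := hsm
  have hL : 0 < β.length := List.length_pos_iff.2 hβ.1
  obtain ⟨x, hx, hxβ⟩ := exists_periodic_wordSegment_eq hβ.1
  generalize β.length = L at *
  subst hxβ
  simp only [flatten_replicate_wordSegment hx] at hlab ⊢
  have hβℰ : lrange Edge (wordSegment x 0 L) ∈ eventualHSet Edge ℰ A₀ := by
    rw [eventualHSet_eq_of_minimal hacc h0 hmin hA₀ hA₀ne]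
    exact hacc.1 _ hβ
  obtain ⟨-, n₀, hn₀⟩ := hβℰ
  obtain ⟨K, hK⟩ :=
    exists_length_le_of_mem_HSet (hn₀ (wordSegment x L n₀) (length_wordSegment ..))
  rw [lrange, ← relRange_append, ← wordSegment_zero_add] at hK
  refine ⟨(K + 1) * L + (L + n₀) + 2 * L, by omega, fun n hn => ?_⟩
  have hcov : relRange Edge A₀ (wordSegment x 0 ((K + 1) * L + (L + n₀))) ⊆
      ⋃ (α : List Λ) (_ : α.length ≤ K), relRange Edge A₀ α := by
    rw [wordSegment_zero_add, relRange_append,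
      wordSegment_eq_of_modEq hx (Nat.modEq_zero_iff_dvd.2 (dvd_mul_left L (K + 1)))]
    exact (relRange_subset_lrange _ _).trans hK
  have hKL : K + 1 ≤ (K + 1) * L := Nat.le_mul_of_pos_right _ hL
  have hnL : n ≤ n * L := Nat.le_mul_of_pos_right n hL
  rw [take_wordSegment x 0 hnL]
  refine (relRange_wordSegment_subset_of_cover hx hL hirr hlab hcov (by omega) hn).trans
    (Set.iUnion₂_mono fun j hj => ?_)
  rw [take_wordSegment x 0 ((Finset.mem_Icc.1 hj).2.trans (by omega) : j ≤ n * L)]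

/-- in a minimal labeled space, if `L(A₀E^{n|β|}) = {βⁿ}` for an
irreducible path `β`, then eventually `r(A₀, x̄_{[1,n]}) ⊆ ⋃_{j=1}^{n-1} r(A₀, x̄_{[1,j]})`,
where `x̄ = βββ⋯`. -/
theorem minimal_repetition_range_absorption (Edge : V → Λ → V → Prop) (ℰ : Set (Set V))
    (hsm : SmallestAccom Edge ℰ) (hwlr : WLR Edge ℰ) (hmin : MinimalLS Edge ℰ)
    (A₀ : Set V) (hA₀ : A₀ ∈ ℰ) (hA₀ne : A₀.Nonempty)
    (β : List Λ) (hβ : IsLP Edge β) (hirr : IrreduciblePath β)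
    (hlab : ∀ n : ℕ, 1 ≤ n →
      labelsOfLen Edge A₀ (n * β.length) = {(List.replicate n β).flatten}) :
    ∃ N : ℕ, 1 ≤ N ∧ ∀ n : ℕ, N ≤ n →
      relRange Edge A₀ ((List.replicate n β).flatten.take n) ⊆
        ⋃ j ∈ Finset.Icc 1 (n - 1), relRange Edge A₀ ((List.replicate n β).flatten.take j) :=
  minimal_repetition_range_absorption_general Edge ℰ hsm hmin A₀ hA₀ hA₀ne β hβ hirr hlab
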